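/- arXiv:2103.13330 — 3 statements merged into one kernel-verified Lean document; each statement's English description precedes it below -/
import Mathlib

section
/- Let Ω = (0,1)^d with d > 1, let w, f be bounded measurable functions on Ω with w(x) ≥ c₁ > 0 a.e., let g be a bounded measurable function on ∂Ω, let L be the Ritz energy functional, and let u* be a bounded C¹ weak solution (as in the weak formulation) with bounded gradient. Let N be a nonempty class of bounded C¹ functions with bounded gradients, let L̂ : N → ℝ be any functional with S := sup_{u∈N}|L(u) − L̂(u)| < ∞, let û ∈ N satisfy L̂(û) ≤ L̂(u) for all u ∈ N, and let u_A ∈ N. Then ‖u_A − u*‖²_{H¹(Ω)} ≤ (2/min(c₁,1))·[ (max(‖w‖_{L^∞(Ω)},1)/2)·inf_{ū∈N} ‖ū − u*‖²_{H¹(Ω)} + 2S + (L̂(u_A) − L̂(û)) ]. -/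
/-
Testing the weak formulation with `u - u*` gives `L(u) - L(u*) = a(u - u*) / 2`, where
`a(v) = ∫_Ω ‖∇v‖² + ∫_Ω w v²` (`energyNormSq`), and
`min(c₁, 1) ‖v‖²_{H¹} ≤ a(v) ≤ max(‖w‖_∞, 1) ‖v‖²_{H¹}`.
For any `ū ∈ N`, passing through `L̂`, which is `S`-close to `L` on `N` and minimal at `û`, gives
`L(u_A) - L(ū) ≤ 2S + L̂(u_A) - L̂(û)`; combining these and taking the infimum over `ū` yields
the bound. The boundary integrals are finite because `∂Ω` is covered by `2d` isometric copies
of `[0,1]^(d-1)`.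
-/

open MeasureTheory

noncomputable section

/-- The open unit cube `Ω = (0,1)^d` in `ℝ^d`. -/
def openCube (d : ℕ) : Set (EuclideanSpace ℝ (Fin d)) := {x | ∀ i, x i ∈ Set.Ioo (0:ℝ) 1}

/-- The closed unit cube `[0,1]^d` in `ℝ^d`. -/
def closedCube (d : ℕ) : Set (EuclideanSpace ℝ (Fin d)) := {x | ∀ i, x i ∈ Set.Icc (0:ℝ) 1}

/-- `u` is a bounded `C¹` function with bounded gradient on a neighborhood of the closed cube. -/
def IsNice (d : ℕ) (u : EuclideanSpace ℝ (Fin d) → ℝ) : Prop :=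
  ∃ U : Set (EuclideanSpace ℝ (Fin d)), IsOpen U ∧ closedCube d ⊆ U ∧ ContDiffOn ℝ 1 u U ∧
    (∃ C, ∀ x ∈ U, |u x| ≤ C) ∧ (∃ C, ∀ x ∈ U, ‖gradient u x‖ ≤ C)

/-- The Ritz energy functional
`L(u) = ½∫_Ω ‖∇u‖² + ½∫_Ω w u² − ∫_Ω f u − ∫_{∂Ω} g u dH^{d-1}`. -/
def ritzEnergy (d : ℕ) (w f g : EuclideanSpace ℝ (Fin d) → ℝ)
    (u : EuclideanSpace ℝ (Fin d) → ℝ) : ℝ :=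
  (1/2) * (∫ x in openCube d, ‖gradient u x‖^2) +
    (1/2) * (∫ x in openCube d, w x * (u x)^2) -
    (∫ x in openCube d, f x * u x) -
    ∫ y in frontier (openCube d), g y * u y ∂(μH[(d:ℝ) - 1])

/-- `ustar` satisfies the weak formulation of the Neumann problem
`−Δu + wu = f` in `Ω`, `∂u/∂n = g` on `∂Ω`, tested against all bounded `C¹`
functions with bounded gradient. -/
def IsWeakSol (d : ℕ) (w f g ustar : EuclideanSpace ℝ (Fin d) → ℝ) : Prop :=
  ∀ v : EuclideanSpace ℝ (Fin d) → ℝ, IsNice d v →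
    (∫ x in openCube d, (inner ℝ (gradient ustar x) (gradient v x) : ℝ)) +
      (∫ x in openCube d, w x * ustar x * v x) =
    (∫ x in openCube d, f x * v x) +
      ∫ y in frontier (openCube d), g y * v y ∂(μH[(d:ℝ) - 1])

/-- The squared `H¹(Ω)` norm `∫_Ω u² + ∫_Ω ‖∇u‖²`. -/
def H1normSq (d : ℕ) (u : EuclideanSpace ℝ (Fin d) → ℝ) : ℝ :=
  (∫ x in openCube d, (u x)^2) + ∫ x in openCube d, ‖gradient u x‖^2

open scoped ENNReal

lemma isOpen_openCube (d : ℕ) : IsOpen (openCube d) := by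
  have : openCube d = ⋂ i, (fun x : EuclideanSpace ℝ (Fin d) => x i) ⁻¹' Set.Ioo 0 1 := by
    ext x; simp [openCube]
  rw [this]
  exact isOpen_iInter_of_finite fun i => isOpen_Ioo.preimage (EuclideanSpace.proj i).continuous

lemma isCompact_closedCube (d : ℕ) : IsCompact (closedCube d) := by
  have : closedCube d = EuclideanSpace.equiv (Fin d) ℝ ⁻¹' Set.Icc 0 1 := by
    ext x; simp [closedCube, Pi.le_def, forall_and]
  rw [this]
  exact (EuclideanSpace.equiv (Fin d) ℝ).toHomeomorph.isCompact_preimage.2 isCompact_Icc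

lemma openCube_subset_closedCube (d : ℕ) : openCube d ⊆ closedCube d :=
  fun _ hx i => Set.Ioo_subset_Icc_self (hx i)

lemma frontier_openCube_subset_closedCube (d : ℕ) : frontier (openCube d) ⊆ closedCube d :=
  frontier_subset_closure.trans
    ((isCompact_closedCube d).isClosed.closure_subset_iff.2 (openCube_subset_closedCube d))

lemma volume_openCube_lt_top (d : ℕ) : volume (openCube d) < ∞ :=
  (measure_mono (openCube_subset_closedCube d)).trans_lt (isCompact_closedCube d).measure_lt_top

def insertCoord {m : ℕ} (i : Fin (m + 1)) (b : ℝ) :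
    EuclideanSpace ℝ (Fin m) → EuclideanSpace ℝ (Fin (m + 1)) :=
  fun y => WithLp.toLp 2 (Fin.insertNth i b y.ofLp)

lemma isometry_insertCoord {m : ℕ} (i : Fin (m + 1)) (b : ℝ) : Isometry (insertCoord i b) := by
  refine Isometry.of_dist_eq fun y z => ?_
  rw [EuclideanSpace.dist_eq, EuclideanSpace.dist_eq, Fin.sum_univ_succAbove _ i]
  simp [insertCoord]

lemma frontier_openCube_subset_iUnion (m : ℕ) :
    frontier (openCube (m + 1)) ⊆
      ⋃ i, (insertCoord i 0 '' closedCube m ∪ insertCoord i 1 '' closedCube m) := by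
  intro x hx
  have hxc := frontier_openCube_subset_closedCube _ hx
  have hxo : x ∉ openCube (m + 1) := by
    simpa [(isOpen_openCube _).interior_eq] using hx.2
  simp only [openCube, Set.mem_ofPred_eq, not_forall] at hxo
  obtain ⟨i, hi⟩ := hxo
  set y : EuclideanSpace ℝ (Fin m) := WithLp.toLp 2 fun j => x (i.succAbove j)
  have hproj : insertCoord i (x i) y = x :=
    congrArg (WithLp.toLp 2) (Fin.insertNth_self_removeNth i x.ofLp)
  have hmem : y ∈ closedCube m := fun j => hxc _
  refine Set.mem_iUnion.2 ⟨i, ?_⟩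
  rcases (hxc i).1.eq_or_lt with h0 | h0
  · exact Or.inl ⟨_, hmem, by rw [h0, hproj]⟩
  · have h1 : x i = 1 := le_antisymm (hxc i).2 (not_lt.1 fun h1 => hi ⟨h0, h1⟩)
    exact Or.inr ⟨_, hmem, by rw [← h1, hproj]⟩

lemma hausdorffMeasure_frontier_openCube_lt_top (d : ℕ) :
    μH[(d : ℝ) - 1] (frontier (openCube d)) < ∞ := by
  rcases d with _ | m
  · have : openCube 0 = Set.univ := Set.eq_univ_of_forall fun x i => i.elim0
    simp [this]
  have hcube : μH[(m : ℝ)] (closedCube m) < ∞ := by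
    simpa using (isCompact_closedCube m).measure_lt_top
      (μ := μH[(Module.finrank ℝ (EuclideanSpace ℝ (Fin m)) : ℝ)])
  have hface : ∀ i (b : ℝ), μH[(m : ℝ)] (insertCoord i b '' closedCube m) < ∞ := fun i b => by
    rwa [(isometry_insertCoord i b).hausdorffMeasure_image (Or.inl m.cast_nonneg)]
  push_cast
  rw [add_sub_cancel_right]
  refine (measure_mono (frontier_openCube_subset_iUnion m)).trans_lt <|
    (measure_iUnion_fintype_le _ _).trans_lt <| ENNReal.sum_lt_top.2 fun i _ => ?_
  exact (measure_union_le _ _).trans_lt (ENNReal.add_lt_top.2 ⟨hface i 0, hface i 1⟩)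

instance (d : ℕ) : IsFiniteMeasure (volume.restrict (openCube d)) :=
  isFiniteMeasure_restrict.2 (volume_openCube_lt_top d).ne

instance (d : ℕ) : IsFiniteMeasure ((μH[(d : ℝ) - 1]).restrict (frontier (openCube d))) :=
  isFiniteMeasure_restrict.2 (hausdorffMeasure_frontier_openCube_lt_top d).ne

lemma gradient_sub {E : Type*} [NormedAddCommGroup E] [InnerProductSpace ℝ E] [CompleteSpace E]
    {u v : E → ℝ} {x : E} (hu : DifferentiableAt ℝ u x) (hv : DifferentiableAt ℝ v x) :
    gradient (u - v) x = gradient u x - gradient v x := by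
  rw [gradient, gradient, gradient, fderiv_sub hu hv, map_sub]

namespace IsNice

variable {d : ℕ} {u v : EuclideanSpace ℝ (Fin d) → ℝ}

lemma continuousOn (hu : IsNice d u) : ContinuousOn u (closedCube d) :=
  let ⟨_, _, hUs, hC1, _⟩ := hu
  hC1.continuousOn.mono hUs

lemma continuousOn_gradient (hu : IsNice d u) : ContinuousOn (gradient u) (closedCube d) :=
  let ⟨_, hUo, hUs, hC1, _⟩ := hu
  ((InnerProductSpace.toDual ℝ _).symm.continuous.comp_continuousOn
    (hC1.continuousOn_fderiv_of_isOpen hUo le_rfl)).mono hUs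

lemma differentiableAt (hu : IsNice d u) {x : EuclideanSpace ℝ (Fin d)} (hx : x ∈ closedCube d) :
    DifferentiableAt ℝ u x :=
  let ⟨_, hUo, hUs, hC1, _⟩ := hu
  (hC1.contDiffAt (hUo.mem_nhds (hUs hx))).differentiableAt one_ne_zero

lemma sub (hu : IsNice d u) (hv : IsNice d v) : IsNice d (u - v) := by
  obtain ⟨U, hUo, hUs, hu₁, ⟨Cu, hCu⟩, ⟨Gu, hGu⟩⟩ := hu
  obtain ⟨V, hVo, hVs, hv₁, ⟨Cv, hCv⟩, ⟨Gv, hGv⟩⟩ := hv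
  have hdiff : ∀ x ∈ U ∩ V, gradient (u - v) x = gradient u x - gradient v x := fun x hx =>
    gradient_sub ((hu₁.contDiffAt (hUo.mem_nhds hx.1)).differentiableAt one_ne_zero)
      ((hv₁.contDiffAt (hVo.mem_nhds hx.2)).differentiableAt one_ne_zero)
  refine ⟨U ∩ V, hUo.inter hVo, Set.subset_inter hUs hVs,
    (hu₁.mono Set.inter_subset_left).sub (hv₁.mono Set.inter_subset_right),
    ⟨Cu + Cv, fun x hx => ?_⟩, ⟨Gu + Gv, fun x hx => ?_⟩⟩
  · exact (abs_sub _ _).trans (add_le_add (hCu x hx.1) (hCv x hx.2))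
  · rw [hdiff x hx]
    exact (norm_sub_le _ _).trans (add_le_add (hGu x hx.1) (hGv x hx.2))

end IsNice

lemma ContinuousOn.integrableOn_openCube {d : ℕ} {φ : EuclideanSpace ℝ (Fin d) → ℝ}
    (hφ : ContinuousOn φ (closedCube d)) : IntegrableOn φ (openCube d) :=
  (hφ.integrableOn_compact (isCompact_closedCube d)).mono_set (openCube_subset_closedCube d)

lemma memLp_top_of_abs_le {α : Type*} [MeasurableSpace α] {μ : Measure α} {s : Set α}
    (hs : MeasurableSet s) {φ : α → ℝ} (hφ : Measurable φ) (hb : ∃ C, ∀ x ∈ s, |φ x| ≤ C) :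
    MemLp φ ∞ (μ.restrict s) :=
  let ⟨C, hC⟩ := hb
  memLp_top_of_bound hφ.aestronglyMeasurable C (ae_restrict_of_forall_mem hs hC)

lemma setIntegral_eq_add_two_mul_add {α : Type*} [MeasurableSpace α] {μ : Measure α} {s : Set α}
    (hs : MeasurableSet s) {F a b c : α → ℝ} (ha : IntegrableOn a s μ) (hb : IntegrableOn b s μ)
    (hc : IntegrableOn c s μ) (h : ∀ x ∈ s, F x = a x + 2 * b x + c x) :
    ∫ x in s, F x ∂μ = (∫ x in s, a x ∂μ) + 2 * (∫ x in s, b x ∂μ) + ∫ x in s, c x ∂μ := by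
  have hab : IntegrableOn (fun x => a x + 2 * b x) s μ := ha.add (hb.const_mul 2)
  rw [setIntegral_congr_fun hs h, integral_add hab hc, integral_add ha (hb.const_mul 2),
    integral_const_mul]

def energyNormSq (d : ℕ) (w v : EuclideanSpace ℝ (Fin d) → ℝ) : ℝ :=
  (∫ x in openCube d, ‖gradient v x‖ ^ 2) + ∫ x in openCube d, w x * v x ^ 2

section Energy

variable {d : ℕ} {w f g ustar u v : EuclideanSpace ℝ (Fin d) → ℝ}

lemma ritzEnergy_sub_ritzEnergy (hw : IntegrableOn w (openCube d))
    (hf : IntegrableOn f (openCube d))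
    (hg : IntegrableOn g (frontier (openCube d)) μH[(d : ℝ) - 1])
    (hstar : IsNice d ustar) (hweak : IsWeakSol d w f g ustar) (hu : IsNice d u) :
    ritzEnergy d w f g u - ritzEnergy d w f g ustar = energyNormSq d w (u - ustar) / 2 := by
  have hΩ := (isOpen_openCube d).measurableSet
  have hΩ_sub := openCube_subset_closedCube d
  have hfr_sub := frontier_openCube_subset_closedCube d
  have hv := hu.sub hstar
  have hgrad : ∫ x in openCube d, ‖gradient u x‖ ^ 2 =
      (∫ x in openCube d, ‖gradient (u - ustar) x‖ ^ 2) +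
      2 * (∫ x in openCube d, inner ℝ (gradient ustar x) (gradient (u - ustar) x)) +
      ∫ x in openCube d, ‖gradient ustar x‖ ^ 2 := by
    refine setIntegral_eq_add_two_mul_add hΩ
      (hv.continuousOn_gradient.norm.pow 2).integrableOn_openCube
      (hstar.continuousOn_gradient.inner hv.continuousOn_gradient).integrableOn_openCube
      (hstar.continuousOn_gradient.norm.pow 2).integrableOn_openCube fun x hx => ?_
    rw [gradient_sub (hu.differentiableAt (hΩ_sub hx)) (hstar.differentiableAt (hΩ_sub hx)),
      norm_sub_sq_real, inner_sub_right, real_inner_comm, real_inner_self_eq_norm_sq]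
    ring
  have hmass : ∫ x in openCube d, w x * u x ^ 2 =
      (∫ x in openCube d, w x * (u - ustar) x ^ 2) +
      2 * (∫ x in openCube d, w x * (ustar x * (u - ustar) x)) +
      ∫ x in openCube d, w x * ustar x ^ 2 := by
    refine setIntegral_eq_add_two_mul_add hΩ
      (hw.mul_continuousOn_of_subset (hv.continuousOn.pow 2) hΩ (isCompact_closedCube d) hΩ_sub)
      (hw.mul_continuousOn_of_subset (hstar.continuousOn.mul hv.continuousOn) hΩ
        (isCompact_closedCube d) hΩ_sub)
      (hw.mul_continuousOn_of_subset (hstar.continuousOn.pow 2) hΩ (isCompact_closedCube d) hΩ_sub)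
      fun x _ => ?_
    simp only [Pi.sub_apply]
    ring
  have hload : ∫ x in openCube d, f x * u x =
      (∫ x in openCube d, f x * (u - ustar) x) + ∫ x in openCube d, f x * ustar x := by
    rw [← integral_add
      (hf.mul_continuousOn_of_subset hv.continuousOn hΩ (isCompact_closedCube d) hΩ_sub)
      (hf.mul_continuousOn_of_subset hstar.continuousOn hΩ (isCompact_closedCube d) hΩ_sub)]
    simp only [Pi.sub_apply, ← mul_add, sub_add_cancel]
  have hbdry : ∫ y in frontier (openCube d), g y * u y ∂(μH[(d : ℝ) - 1]) =
      (∫ y in frontier (openCube d), g y * (u - ustar) y ∂(μH[(d : ℝ) - 1])) +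
      ∫ y in frontier (openCube d), g y * ustar y ∂(μH[(d : ℝ) - 1]) := by
    rw [← integral_add
      (hg.mul_continuousOn_of_subset hv.continuousOn isClosed_frontier.measurableSet
        (isCompact_closedCube d) hfr_sub)
      (hg.mul_continuousOn_of_subset hstar.continuousOn isClosed_frontier.measurableSet
        (isCompact_closedCube d) hfr_sub)]
    simp only [Pi.sub_apply, ← mul_add, sub_add_cancel]
  have htest := hweak (u - ustar) hv
  simp only [mul_assoc] at htest
  rw [ritzEnergy, ritzEnergy, energyNormSq, hgrad, hmass, hload, hbdry]
  linarith

lemma min_mul_H1normSq_le_energyNormSq {c : ℝ} (hw : IntegrableOn w (openCube d))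
    (hwc : ∀ᵐ x ∂(volume.restrict (openCube d)), c ≤ w x) (hv : IsNice d v) :
    min c 1 * H1normSq d v ≤ energyNormSq d w v := by
  have hmass : min c 1 * ∫ x in openCube d, v x ^ 2 ≤ ∫ x in openCube d, w x * v x ^ 2 := by
    rw [← integral_const_mul]
    refine integral_mono_ae ((hv.continuousOn.pow 2).integrableOn_openCube.const_mul _)
      (hw.mul_continuousOn_of_subset (hv.continuousOn.pow 2) (isOpen_openCube d).measurableSet
        (isCompact_closedCube d) (openCube_subset_closedCube d)) ?_
    filter_upwards [hwc] with x hx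
    exact mul_le_mul_of_nonneg_right ((min_le_left c 1).trans hx) (sq_nonneg _)
  have hgrad : 0 ≤ ∫ x in openCube d, ‖gradient v x‖ ^ 2 := integral_nonneg fun _ => sq_nonneg _
  rw [H1normSq, energyNormSq]
  nlinarith [min_le_right c 1]

lemma energyNormSq_le_max_mul_H1normSq (hw : MemLp w ∞ (volume.restrict (openCube d)))
    (hv : IsNice d v) :
    energyNormSq d w v ≤
      max (eLpNorm w ∞ (volume.restrict (openCube d))).toReal 1 * H1normSq d v := by
  set M := max (eLpNorm w ∞ (volume.restrict (openCube d))).toReal 1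
  have hmass : ∫ x in openCube d, w x * v x ^ 2 ≤ M * ∫ x in openCube d, v x ^ 2 := by
    rw [← integral_const_mul]
    refine integral_mono_ae
      (IntegrableOn.mul_continuousOn_of_subset (hw.integrable le_top) (hv.continuousOn.pow 2)
        (isOpen_openCube d).measurableSet (isCompact_closedCube d) (openCube_subset_closedCube d))
      ((hv.continuousOn.pow 2).integrableOn_openCube.const_mul _) ?_
    filter_upwards [ae_le_lpNorm_exponent_top hw] with x hx
    rw [← toReal_eLpNorm hw.1] at hx
    exact mul_le_mul_of_nonneg_right ((le_abs_self _).trans (hx.trans (le_max_left _ _)))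
      (sq_nonneg _)
  have hgrad : 0 ≤ ∫ x in openCube d, ‖gradient v x‖ ^ 2 := integral_nonneg fun _ => sq_nonneg _
  have hM : 1 ≤ M := le_max_right _ _
  rw [H1normSq, energyNormSq]
  nlinarith

end Energy

lemma le_mul_csInf_image {α : Type*} {s : Set α} {F : α → ℝ} {a k : ℝ} (hs : s.Nonempty)
    (hk : 0 < k) (h : ∀ x ∈ s, a ≤ k * F x) : a ≤ k * sInf (F '' s) := by
  rw [← div_le_iff₀' hk]
  exact le_csInf (hs.image F) (Set.forall_mem_image.2 fun x hx => (div_le_iff₀' hk).2 (h x hx))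

theorem deepRitz_error_decomposition_general (d : ℕ)
    (w f g : EuclideanSpace ℝ (Fin d) → ℝ) (c₁ : ℝ) (hc₁ : 0 < c₁)
    (hw : Measurable w) (hwb : ∃ C, ∀ x ∈ openCube d, |w x| ≤ C)
    (hwlb : ∀ᵐ x ∂(volume.restrict (openCube d)), c₁ ≤ w x)
    (hf : Measurable f) (hfb : ∃ C, ∀ x ∈ openCube d, |f x| ≤ C)
    (hg : Measurable g) (hgb : ∃ C, ∀ y ∈ frontier (openCube d), |g y| ≤ C)
    (ustar : EuclideanSpace ℝ (Fin d) → ℝ)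
    (hnice : IsNice d ustar) (hweak : IsWeakSol d w f g ustar)
    (N : Set (EuclideanSpace ℝ (Fin d) → ℝ)) (hN : N.Nonempty)
    (hNnice : ∀ u ∈ N, IsNice d u)
    (Lhat : (EuclideanSpace ℝ (Fin d) → ℝ) → ℝ)
    (hbdd : BddAbove ((fun u => |ritzEnergy d w f g u - Lhat u|) '' N))
    (S : ℝ) (hS : S = sSup ((fun u => |ritzEnergy d w f g u - Lhat u|) '' N))
    (uhat : EuclideanSpace ℝ (Fin d) → ℝ)
    (hmin : ∀ u ∈ N, Lhat uhat ≤ Lhat u)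
    (uA : EuclideanSpace ℝ (Fin d) → ℝ) (huA : uA ∈ N) :
    H1normSq d (uA - ustar) ≤
      2 / min c₁ 1 *
        (max ((eLpNorm w ⊤ (volume.restrict (openCube d))).toReal) 1 / 2 *
            sInf ((fun ubar => H1normSq d (ubar - ustar)) '' N)
          + 2 * S + (Lhat uA - Lhat uhat)) := by
  have hΩ := (isOpen_openCube d).measurableSet
  have hwL : MemLp w ∞ (volume.restrict (openCube d)) := memLp_top_of_abs_le hΩ hw hwb
  have henergy : ∀ u ∈ N, ritzEnergy d w f g u - ritzEnergy d w f g ustar =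
      energyNormSq d w (u - ustar) / 2 := fun u hu =>
    ritzEnergy_sub_ritzEnergy (hwL.integrable le_top)
      ((memLp_top_of_abs_le hΩ hf hfb).integrable le_top)
      ((memLp_top_of_abs_le isClosed_frontier.measurableSet hg hgb).integrable le_top)
      hnice hweak (hNnice u hu)
  have hgap : ∀ u ∈ N, |ritzEnergy d w f g u - Lhat u| ≤ S := fun u hu =>
    hS ▸ le_csSup hbdd (Set.mem_image_of_mem _ hu)
  have hlower := min_mul_H1normSq_le_energyNormSq (hwL.integrable le_top) hwlb
    ((hNnice uA huA).sub hnice)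
  have hcompare : ∀ ubar ∈ N, min c₁ 1 / 2 * H1normSq d (uA - ustar) - 2 * S - (Lhat uA - Lhat uhat)
      ≤ max ((eLpNorm w ⊤ (volume.restrict (openCube d))).toReal) 1 / 2 *
        H1normSq d (ubar - ustar) := fun ubar hubar => by
    have hupper := energyNormSq_le_max_mul_H1normSq hwL ((hNnice ubar hubar).sub hnice)
    have hA := abs_le.1 (hgap uA huA)
    have hbar := abs_le.1 (hgap ubar hubar)
    linarith [henergy uA huA, henergy ubar hubar, hmin ubar hubar]
  have hinf := le_mul_csInf_image hN (by positivity) hcompare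
  rw [div_mul_eq_mul_div, le_div_iff₀ (lt_min hc₁ one_pos)]
  linarith

/-- **Error decomposition of the deep Ritz method (Lemma 3.1).**
`‖u_A − u*‖²_{H¹} ≤ (2/min(c₁,1))·[(max(‖w‖_∞,1)/2)·inf_{ū∈N}‖ū−u*‖²_{H¹} + 2S + (L̂(u_A) − L̂(û))]`. -/
theorem deepRitz_error_decomposition (d : ℕ) (hd : 1 < d)
    (w f g : EuclideanSpace ℝ (Fin d) → ℝ) (c₁ : ℝ) (hc₁ : 0 < c₁)
    (hw : Measurable w) (hwb : ∃ C, ∀ x ∈ openCube d, |w x| ≤ C)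
    (hwlb : ∀ᵐ x ∂(volume.restrict (openCube d)), c₁ ≤ w x)
    (hf : Measurable f) (hfb : ∃ C, ∀ x ∈ openCube d, |f x| ≤ C)
    (hg : Measurable g) (hgb : ∃ C, ∀ y ∈ frontier (openCube d), |g y| ≤ C)
    (ustar : EuclideanSpace ℝ (Fin d) → ℝ)
    (hnice : IsNice d ustar) (hweak : IsWeakSol d w f g ustar)
    (N : Set (EuclideanSpace ℝ (Fin d) → ℝ)) (hN : N.Nonempty)
    (hNnice : ∀ u ∈ N, IsNice d u)
    (Lhat : (EuclideanSpace ℝ (Fin d) → ℝ) → ℝ)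
    (hbdd : BddAbove ((fun u => |ritzEnergy d w f g u - Lhat u|) '' N))
    (S : ℝ) (hS : S = sSup ((fun u => |ritzEnergy d w f g u - Lhat u|) '' N))
    (uhat : EuclideanSpace ℝ (Fin d) → ℝ) (huhat : uhat ∈ N)
    (hmin : ∀ u ∈ N, Lhat uhat ≤ Lhat u)
    (uA : EuclideanSpace ℝ (Fin d) → ℝ) (huA : uA ∈ N) :
    H1normSq d (uA - ustar) ≤
      2 / min c₁ 1 *
        (max ((eLpNorm w ⊤ (volume.restrict (openCube d))).toReal) 1 / 2 *
            sInf ((fun ubar => H1normSq d (ubar - ustar)) '' N)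
          + 2 * S + (Lhat uA - Lhat uhat)) :=
  deepRitz_error_decomposition_general d w f g c₁ hc₁ hw hwb hwlb hf hfb hg hgb ustar hnice hweak N
    hN hNnice Lhat hbdd S hS uhat hmin uA huA
end
end

section
/- Let (X, μ) be a probability space, let B > 0, and let F be a nonempty countable class of measurable functions X → [−B, B]. Let Z₁,…,Z_n be i.i.d. random variables with law μ and let σ₁,…,σ_n be i.i.d. Rademacher variables (uniform on {−1,1}) independent of (Z₁,…,Z_n). Then E[ sup_{f∈F} | E_μ[f] − (1/n)Σ_{i=1}^n f(Zᵢ) | ] ≤ 2·E[ sup_{f∈F} (1/n)|Σ_{i=1}^n σᵢ f(Zᵢ)| ]. -/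
/-!
Replace the population mean `∫ f ∂μ` by the empirical mean of an independent ghost sample
`z'`: since a supremum of integrals is at most the integral of the supremum, the expected
uniform deviation is at most the expected value of `sup_f |P'ₙ f - Pₙ f|`. Exchanging
`zᵢ ↔ z'ᵢ` at the indices where a sign pattern `σ` is negative preserves the joint law of
`(z, z')` and turns `P'ₙ f - Pₙ f` into `(1/n) ∑ σᵢ f(z'ᵢ) - (1/n) ∑ σᵢ f(zᵢ)`, so for every `σ`
the ghost deviation is at most twice the Rademacher supremum; averaging over the `2ⁿ` sign
patterns gives the inequality.
-/

open MeasureTheory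

section SwapUnless

variable {ι α : Type*}

def swapUnless (s : ι → Bool) (p : (ι → α) × (ι → α)) : (ι → α) × (ι → α) :=
  (fun i => if s i then p.1 i else p.2 i, fun i => if s i then p.2 i else p.1 i)

theorem measurePreserving_swapUnless [Fintype ι] [MeasurableSpace α] (μ : ι → Measure α)
    [∀ i, SigmaFinite (μ i)] (s : ι → Bool) :
    MeasurePreserving (swapUnless s) ((Measure.pi μ).prod (Measure.pi μ))
      ((Measure.pi μ).prod (Measure.pi μ)) := by
  have hΦ := measurePreserving_arrowProdEquivProdArrow α α ι μ μ
  have hswap : MeasurePreserving (fun (w : ι → α × α) i => if s i then w i else (w i).swap)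
      (Measure.pi fun i => (μ i).prod (μ i)) (Measure.pi fun i => (μ i).prod (μ i)) :=
    measurePreserving_pi _ _ (f := fun i (q : α × α) => if s i then q else q.swap) fun i => by
      cases s i
      · exact Measure.measurePreserving_swap
      · exact MeasurePreserving.id _
  convert (hΦ.comp hswap).comp (hΦ.symm _) using 1
  funext p
  ext i <;> by_cases h : s i <;>
    simp [swapUnless, h, MeasurableEquiv.arrowProdEquivProdArrow, Equiv.arrowProdEquivProdArrow]

end SwapUnless

section Supremum

variable {ι : Type*} {a : ι → ℝ} {C : ℝ}

theorem bddAbove_range_of_abs_le (h : ∀ i, |a i| ≤ C) : BddAbove (Set.range a) :=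
  ⟨C, Set.forall_mem_range.2 fun i => (le_abs_self _).trans (h i)⟩

theorem abs_ciSup_le [Nonempty ι] (h : ∀ i, |a i| ≤ C) : |⨆ i, a i| ≤ C := by
  obtain ⟨i⟩ := ‹Nonempty ι›
  exact abs_le.2 ⟨(neg_le_of_abs_le (h i)).trans (le_ciSup (bddAbove_range_of_abs_le h) i),
    ciSup_le fun i => (le_abs_self _).trans (h i)⟩

variable [Nonempty ι] [Countable ι] {Ω : Type*} [MeasurableSpace Ω] {ν : Measure Ω}
  [IsFiniteMeasure ν] {g : ι → Ω → ℝ}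

theorem integrable_ciSup_of_abs_le (hg : ∀ i, Measurable (g i)) (hC : ∀ i ω, |g i ω| ≤ C) :
    Integrable (fun ω => ⨆ i, g i ω) ν :=
  .of_bound (Measurable.iSup hg).aestronglyMeasurable C (ae_of_all _ fun ω => abs_ciSup_le (hC · ω))

theorem ciSup_abs_integral_le (hg : ∀ i, Measurable (g i)) (hC : ∀ i ω, |g i ω| ≤ C) :
    ⨆ i, |∫ ω, g i ω ∂ν| ≤ ∫ ω, ⨆ i, |g i ω| ∂ν := by
  have hC' : ∀ i ω, |(|g i ω|)| ≤ C := by simpa only [abs_abs] using hC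
  refine ciSup_le fun i => abs_integral_le_integral_abs.trans <| integral_mono ?_
    (integrable_ciSup_of_abs_le (fun i => (hg i).abs) hC')
    fun ω => le_ciSup (bddAbove_range_of_abs_le (hC' · ω)) i
  exact .of_bound (hg i).abs.aestronglyMeasurable C (ae_of_all _ (hC' i))

end Supremum

section EmpiricalMean

variable {X : Type*} {n : ℕ} {g : X → ℝ} {B : ℝ}

noncomputable def empiricalMean (g : X → ℝ) (z : Fin n → X) : ℝ := (1 / n : ℝ) * ∑ i, g (z i)

noncomputable def signedSum (s : Fin n → Bool) (g : X → ℝ) (z : Fin n → X) : ℝ :=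
  ∑ i, (if s i then (1 : ℝ) else -1) * g (z i)

theorem one_div_mul_abs_sum_le (hn : n ≠ 0) {a : Fin n → ℝ} (h : ∀ i, |a i| ≤ B) :
    (1 / n : ℝ) * |∑ i, a i| ≤ B := by
  have hsum : |∑ i, a i| ≤ n * B :=
    calc |∑ i, a i| ≤ ∑ i, |a i| := Finset.abs_sum_le_sum_abs _ _
      _ ≤ ∑ _i : Fin n, B := Finset.sum_le_sum fun i _ => h i
      _ = n * B := by simp
  calc (1 / n : ℝ) * |∑ i, a i| ≤ (1 / n : ℝ) * (n * B) := by gcongr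
    _ = B := by field_simp

theorem abs_empiricalMean_le (hn : n ≠ 0) (hg : ∀ x, |g x| ≤ B) (z : Fin n → X) :
    |empiricalMean g z| ≤ B := by
  rw [empiricalMean, abs_mul, abs_of_nonneg (by positivity)]
  exact one_div_mul_abs_sum_le hn fun i => hg (z i)

theorem one_div_mul_abs_signedSum_le (hn : n ≠ 0) (hg : ∀ x, |g x| ≤ B) (s : Fin n → Bool)
    (z : Fin n → X) : (1 / n : ℝ) * |signedSum s g z| ≤ B :=
  one_div_mul_abs_sum_le hn fun i => by cases s i <;> simpa using hg (z i)

theorem empiricalMean_swapUnless_sub (s : Fin n → Bool) (g : X → ℝ)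
    (p : (Fin n → X) × (Fin n → X)) :
    empiricalMean g (swapUnless s p).2 - empiricalMean g (swapUnless s p).1 =
      (1 / n : ℝ) * signedSum s g p.2 - (1 / n : ℝ) * signedSum s g p.1 := by
  simp only [empiricalMean, signedSum, swapUnless, ← mul_sub, ← Finset.sum_sub_distrib]
  congr 1
  refine Finset.sum_congr rfl fun i _ => ?_
  cases s i <;> simp

theorem abs_sub_empiricalMean_le (hn : n ≠ 0) (hg : ∀ x, |g x| ≤ B) {c : ℝ} (hc : |c| ≤ B)
    (z : Fin n → X) : |c - empiricalMean g z| ≤ 2 * B := by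
  have := abs_empiricalMean_le hn hg z
  linarith [abs_sub c (empiricalMean g z)]

variable [MeasurableSpace X]

@[fun_prop]
theorem measurable_empiricalMean (hg : Measurable g) : Measurable (empiricalMean (n := n) g) := by
  unfold empiricalMean
  fun_prop

@[fun_prop]
theorem measurable_signedSum (hg : Measurable g) (s : Fin n → Bool) :
    Measurable (signedSum s g) := by
  unfold signedSum
  fun_prop

theorem integral_empiricalMean (μ : Measure X) [IsProbabilityMeasure μ] (hn : n ≠ 0)
    (hg : Integrable g μ) :
    ∫ z, empiricalMean g z ∂(Measure.pi fun _ : Fin n => μ) = ∫ x, g x ∂μ := by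
  have hint : ∀ i, Integrable (fun z : Fin n → X => g (z i)) (Measure.pi fun _ => μ) := fun i =>
    (measurePreserving_eval _ i).integrable_comp_of_integrable hg
  have heval : ∀ i : Fin n, ∫ z, g (z i) ∂(Measure.pi fun _ => μ) = ∫ x, g x ∂μ := fun i =>
    integral_comp_eval (μ := fun _ => μ) hg.aestronglyMeasurable
  simp only [empiricalMean]
  rw [integral_const_mul, integral_finsetSum _ fun i _ => hint i]
  simp only [heval, Finset.sum_const, Finset.card_univ, Fintype.card_fin, nsmul_eq_mul]
  field_simp

end EmpiricalMean

section Symmetrization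

variable {X ι : Type*} {n : ℕ}

noncomputable def uniformDeviation [MeasurableSpace X] (μ : Measure X) (f : ι → X → ℝ)
    (z : Fin n → X) : ℝ :=
  ⨆ i, |(∫ x, f i x ∂μ) - empiricalMean (f i) z|

noncomputable def ghostDeviation (f : ι → X → ℝ) (p : (Fin n → X) × (Fin n → X)) : ℝ :=
  ⨆ i, |empiricalMean (f i) p.2 - empiricalMean (f i) p.1|

noncomputable def rademacherSup (f : ι → X → ℝ) (s : Fin n → Bool) (z : Fin n → X) : ℝ :=
  ⨆ i, (1 / n : ℝ) * |signedSum s (f i) z|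

variable [Nonempty ι] {f : ι → X → ℝ} {B : ℝ}

theorem ghostDeviation_swapUnless_le (hn : n ≠ 0) (hfB : ∀ i x, |f i x| ≤ B)
    (s : Fin n → Bool) (p : (Fin n → X) × (Fin n → X)) :
    ghostDeviation f (swapUnless s p) ≤ rademacherSup f s p.2 + rademacherSup f s p.1 := by
  have hbdd : ∀ z : Fin n → X, BddAbove (Set.range fun i => (1 / n : ℝ) * |signedSum s (f i) z|) :=
    fun z => bddAbove_range_of_abs_le fun i => by
      rw [abs_of_nonneg (by positivity)]
      exact one_div_mul_abs_signedSum_le hn (hfB i) s z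
  refine ciSup_le fun i => ?_
  rw [empiricalMean_swapUnless_sub]
  refine (abs_sub _ _).trans (add_le_add ?_ ?_) <;>
  · rw [abs_mul, abs_of_nonneg (by positivity)]
    exact le_ciSup (hbdd _) i

variable [MeasurableSpace X] [Countable ι] (μ : Measure X) [IsProbabilityMeasure μ]

local notation "π" => Measure.pi fun _ : Fin n => μ

theorem uniformDeviation_le_integral_ghostDeviation (hf : ∀ i, Measurable (f i))
    (hfB : ∀ i x, |f i x| ≤ B) (hn : n ≠ 0) (z : Fin n → X) :
    uniformDeviation μ f z ≤ ∫ z', ghostDeviation f (z, z') ∂π := by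
  have hint : ∀ i, Integrable (f i) μ := fun i =>
    .of_bound (hf i).aestronglyMeasurable B (ae_of_all _ (hfB i))
  have hmean : ∀ i, (∫ x, f i x ∂μ) - empiricalMean (f i) z =
      ∫ z', (empiricalMean (f i) z' - empiricalMean (f i) z) ∂π := fun i => by
    rw [integral_sub _ (integrable_const _), integral_empiricalMean μ hn (hint i)]
    · simp
    · exact .of_bound (by fun_prop) B (ae_of_all _ (abs_empiricalMean_le hn (hfB i)))
  simp only [uniformDeviation, ghostDeviation, hmean]
  exact ciSup_abs_integral_le (fun i => by fun_prop) fun i z' =>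
    abs_sub_empiricalMean_le hn (hfB i) (abs_empiricalMean_le hn (hfB i) z') z

theorem integrable_ghostDeviation (hf : ∀ i, Measurable (f i)) (hfB : ∀ i x, |f i x| ≤ B)
    (hn : n ≠ 0) : Integrable (ghostDeviation f) (Measure.prod π π) := by
  unfold ghostDeviation
  refine integrable_ciSup_of_abs_le (C := 2 * B) (fun i => by fun_prop) fun i p => ?_
  rw [abs_abs]
  exact abs_sub_empiricalMean_le hn (hfB i) (abs_empiricalMean_le hn (hfB i) p.2) p.1

theorem integral_uniformDeviation_le_integral_ghostDeviation (hf : ∀ i, Measurable (f i))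
    (hfB : ∀ i x, |f i x| ≤ B) (hn : n ≠ 0) :
    ∫ z, uniformDeviation μ f z ∂π ≤ ∫ p, ghostDeviation f p ∂(Measure.prod π π) := by
  have hmean_le : ∀ i, |∫ x, f i x ∂μ| ≤ B := fun i => by
    simpa using norm_integral_le_of_norm_le_const (μ := μ)
      (ae_of_all _ fun x => (Real.norm_eq_abs _).trans_le (hfB i x))
  have hint : Integrable (uniformDeviation μ f) π := by
    unfold uniformDeviation
    refine integrable_ciSup_of_abs_le (C := 2 * B) (fun i => by fun_prop) fun i z => ?_
    rw [abs_abs]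
    exact abs_sub_empiricalMean_le hn (hfB i) (hmean_le i) z
  rw [integral_prod _ (integrable_ghostDeviation μ hf hfB hn)]
  exact integral_mono hint (integrable_ghostDeviation μ hf hfB hn).integral_prod_left
    (uniformDeviation_le_integral_ghostDeviation μ hf hfB hn)

theorem integral_ghostDeviation_le (hf : ∀ i, Measurable (f i)) (hfB : ∀ i x, |f i x| ≤ B)
    (hn : n ≠ 0) (s : Fin n → Bool) :
    ∫ p, ghostDeviation f p ∂(Measure.prod π π) ≤ 2 * ∫ z, rademacherSup f s z ∂π := by
  have hswap := measurePreserving_swapUnless (fun _ : Fin n => μ) s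
  have hG := integrable_ghostDeviation μ hf hfB hn
  have hR : Integrable (rademacherSup f s) π := by
    unfold rademacherSup
    refine integrable_ciSup_of_abs_le (C := B) (fun i => by fun_prop) fun i z => ?_
    rw [abs_of_nonneg (by positivity)]
    exact one_div_mul_abs_signedSum_le hn (hfB i) s z
  calc ∫ p, ghostDeviation f p ∂(Measure.prod π π)
      = ∫ p, ghostDeviation f (swapUnless s p) ∂(Measure.prod π π) := by
        rw [← integral_map hswap.measurable.aemeasurable (by rw [hswap.map_eq]; exact hG.1),
          hswap.map_eq]
    _ ≤ ∫ p, (rademacherSup f s p.2 + rademacherSup f s p.1) ∂(Measure.prod π π) :=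
        integral_mono (hswap.integrable_comp_of_integrable hG) ((hR.comp_snd _).add (hR.comp_fst _))
          (ghostDeviation_swapUnless_le hn hfB s)
    _ = 2 * ∫ z, rademacherSup f s z ∂π := by
        rw [integral_add (hR.comp_snd _) (hR.comp_fst _), integral_fun_snd, integral_fun_fst]
        simp only [probReal_univ, one_smul]
        ring

theorem integral_uniformDeviation_le (hf : ∀ i, Measurable (f i)) (hfB : ∀ i x, |f i x| ≤ B)
    (hn : n ≠ 0) :
    ∫ z, uniformDeviation μ f z ∂π ≤
      2 * ((1 / 2 ^ n : ℝ) * ∑ s : Fin n → Bool, ∫ z, rademacherSup f s z ∂π) :=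
  calc ∫ z, uniformDeviation μ f z ∂π ≤ ∫ p, ghostDeviation f p ∂(Measure.prod π π) :=
        integral_uniformDeviation_le_integral_ghostDeviation μ hf hfB hn
    _ = (1 / 2 ^ n : ℝ) * ∑ _s : Fin n → Bool, ∫ p, ghostDeviation f p ∂(Measure.prod π π) := by
        simp
    _ ≤ (1 / 2 ^ n : ℝ) * ∑ s : Fin n → Bool, 2 * ∫ z, rademacherSup f s z ∂π := by
        gcongr with s
        exact integral_ghostDeviation_le μ hf hfB hn s
    _ = 2 * ((1 / 2 ^ n : ℝ) * ∑ s : Fin n → Bool, ∫ z, rademacherSup f s z ∂π) := by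
        rw [← Finset.mul_sum]
        ring

end Symmetrization

theorem symmetrization_general {X : Type*} [MeasurableSpace X] (μ : Measure X)
    [IsProbabilityMeasure μ] (B : ℝ)
    (F : Set (X → ℝ)) (hFc : F.Countable) (hFne : F.Nonempty)
    (hmeas : ∀ f ∈ F, Measurable f)
    (hrange : ∀ f ∈ F, ∀ x, f x ∈ Set.Icc (-B) B)
    (n : ℕ) (hn : 0 < n) :
    (∫ z : Fin n → X,
        sSup ((fun f : X → ℝ =>
          |(∫ x, f x ∂μ) - (1 / n : ℝ) * ∑ i, f (z i)|) '' F)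
        ∂(Measure.pi fun _ => μ))
      ≤ 2 * ((1 / 2 ^ n : ℝ) * ∑ s : Fin n → Bool,
          ∫ z : Fin n → X,
            sSup ((fun f : X → ℝ =>
              (1 / n : ℝ) * |∑ i, (if s i then (1:ℝ) else -1) * f (z i)|) '' F)
            ∂(Measure.pi fun _ => μ)) := by
  have : Countable F := hFc.to_subtype
  have : Nonempty F := hFne.to_subtype
  simp only [sSup_image']
  exact integral_uniformDeviation_le μ (fun f => hmeas f f.2)
    (fun f x => abs_le.2 (hrange f f.2 x)) hn.ne'

/-- **Symmetrization inequality (Lemma 3.7).**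
The expected uniform deviation between population and empirical means over a
class `F` is at most twice its Rademacher complexity.  The i.i.d. sample
`Z₁,…,Z_n ∼ μ` is modelled by the product measure `Measure.pi (fun _ => μ)`,
and the expectation over the independent Rademacher signs is written as the
average over all sign patterns `s : Fin n → Bool`. -/
theorem symmetrization {X : Type*} [MeasurableSpace X] (μ : Measure X)
    [IsProbabilityMeasure μ] (B : ℝ) (hB : 0 < B)
    (F : Set (X → ℝ)) (hFc : F.Countable) (hFne : F.Nonempty)
    (hmeas : ∀ f ∈ F, Measurable f)
    (hrange : ∀ f ∈ F, ∀ x, f x ∈ Set.Icc (-B) B)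
    (n : ℕ) (hn : 0 < n) :
    (∫ z : Fin n → X,
        sSup ((fun f : X → ℝ =>
          |(∫ x, f x ∂μ) - (1 / n : ℝ) * ∑ i, f (z i)|) '' F)
        ∂(Measure.pi fun _ => μ))
      ≤ 2 * ((1 / 2 ^ n : ℝ) * ∑ s : Fin n → Bool,
          ∫ z : Fin n → X,
            sSup ((fun f : X → ℝ =>
              (1 / n : ℝ) * |∑ i, (if s i then (1:ℝ) else -1) * f (z i)|) '' F)
            ∂(Measure.pi fun _ => μ)) :=
  symmetrization_general μ B F hFc hFne hmeas hrange n hn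
end

section
/- Let n ≥ 1, B > 0, and let A be a nonempty countable subset of ℝ^n with 0 ∈ A and sup_{a∈A} max_{1≤i≤n}|aᵢ| ≤ B. Suppose C : (0, B] → ℕ is an antitone function such that for every ε ∈ (0, B] there exists a finite set V_ε ⊆ ℝ^n with |V_ε| ≤ C(ε) which is an ε-cover of A with respect to d_∞ (every a ∈ A has v ∈ V_ε with max_i |aᵢ − vᵢ| ≤ ε). Let σ₁,…,σ_n be i.i.d. Rademacher variables (uniform on {−1,1}). Then E_σ[ sup_{a∈A} (1/n)|Σ_{i=1}^n σᵢ aᵢ| ] ≤ inf_{0<δ<B} ( 4δ + (12/√n)·∫_δ^B √(log(2·C(ε))) dε ). -/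
/-!
Chain each `a ∈ A` through its nearest points `p j a` in `B / 2 ^ j`-nets, the net at scale `B`
being `{0}`, so that `a = (a - p m a) + ∑ k < m, (p (k + 1) a - p k a)`. The remainder contributes
at most `n B / 2 ^ m` to the Rademacher sum. The `k`-th link ranges over at most
`C (B / 2 ^ (k + 1)) ^ 2` vectors of sup norm at most `3 B / 2 ^ (k + 1)`, and Massart's lemma
(Hoeffding's bound on exponential moments plus Jensen) bounds the expected maximum over them by
`3 B / 2 ^ (k + 1) * √(2 n log (2 C ^ 2))`. As `C` is antitone, these terms sum to at most
`12 √n ∫ ε in B / 2 ^ (m + 1)..B / 2, √(log (2 C ε))`. Taking the least `m` with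
`B / 2 ^ m ≤ 4 δ` makes this integral part of `∫ ε in δ..B`.
-/
open Finset Real MeasureTheory
open scoped BigOperators

section Rademacher

variable {ι : Type*}

/-- The Rademacher signs `σ i = signVec s i` of a sign pattern `s`; the expectation over i.i.d.
uniform signs is the average `𝔼 s` over all patterns. -/
def signVec (s : ι → Bool) : ι → ℝ := fun i => if s i then 1 else -1

lemma abs_signVec (s : ι → Bool) (i : ι) : |signVec s i| = 1 := by
  by_cases h : s i <;> simp [signVec, h]

variable [Fintype ι]

lemma abs_signVec_dotProduct_le (s : ι → Bool) {a : ι → ℝ} {R : ℝ} (ha : ∀ i, |a i| ≤ R) :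
    |signVec s ⬝ᵥ a| ≤ Fintype.card ι * R :=
  calc |signVec s ⬝ᵥ a| ≤ ∑ i, |signVec s i * a i| := abs_sum_le_sum_abs _ _
    _ ≤ ∑ _i : ι, R := sum_le_sum fun i _ => by rw [abs_mul, abs_signVec, one_mul]; exact ha i
    _ = Fintype.card ι * R := by simp

variable [DecidableEq ι]

lemma sum_exp_signVec_dotProduct (c : ι → ℝ) :
    ∑ s : ι → Bool, exp (signVec s ⬝ᵥ c) = ∏ i, 2 * cosh (c i) := by
  have hpair (x : ℝ) : ∑ b : Bool, exp ((if b then 1 else -1) * x) = 2 * cosh x := by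
    rw [Fintype.sum_bool, cosh_eq, if_pos rfl, if_neg Bool.false_ne_true, one_mul, neg_one_mul]
    ring
  simp_rw [← hpair, prod_univ_sum, Fintype.piFinset_univ, dotProduct, exp_sum, signVec]

/-- Hoeffding's lemma for a Rademacher sum. -/
lemma expect_exp_signVec_dotProduct_le (c : ι → ℝ) :
    𝔼 s, exp (signVec s ⬝ᵥ c) ≤ exp (∑ i, c i ^ 2 / 2) := by
  rw [Fintype.expect_eq_sum_div_card, sum_exp_signVec_dotProduct, exp_sum]
  simp only [prod_mul_distrib, prod_const, card_univ, Fintype.card_fun, Fintype.card_bool]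
  push_cast
  rw [mul_div_cancel_left₀ _ (by positivity)]
  exact prod_le_prod (fun i _ => (cosh_pos _).le) fun i _ => cosh_le_exp_half_sq _

lemma expect_exp_mul_signVec_dotProduct_le (u : ℝ) {w : ι → ℝ} {R : ℝ} (hw : ∀ i, |w i| ≤ R) :
    𝔼 s, exp (u * (signVec s ⬝ᵥ w)) ≤ exp (u ^ 2 * (R ^ 2 * Fintype.card ι) / 2) := by
  simp_rw [← smul_eq_mul, ← dotProduct_smul]
  refine (expect_exp_signVec_dotProduct_le _).trans (exp_le_exp.2 ?_)
  calc ∑ i, (u • w) i ^ 2 / 2 ≤ ∑ _i : ι, u ^ 2 * R ^ 2 / 2 := sum_le_sum fun i _ => by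
        rw [Pi.smul_apply, smul_eq_mul, mul_pow]
        gcongr u ^ 2 * ?_ / 2
        exact sq_le_sq' (abs_le.1 (hw i)).1 (abs_le.1 (hw i)).2
    _ = u ^ 2 * (R ^ 2 * Fintype.card ι) / 2 := by
        simp only [sum_const, card_univ, nsmul_eq_mul]; ring

end Rademacher

lemma Real.exp_expect_le_expect_exp {α : Type*} {s : Finset α} (hs : s.Nonempty) (f : α → ℝ) :
    exp (𝔼 i ∈ s, f i) ≤ 𝔼 i ∈ s, exp (f i) := by
  have hw : ∑ _i ∈ s, (#s : ℝ)⁻¹ = 1 := by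
    rw [sum_const, nsmul_eq_mul, mul_inv_cancel₀ (by exact_mod_cast hs.card_pos.ne')]
  simpa [expect_eq_sum_div_card, div_eq_inv_mul, mul_sum] using
    convexOn_exp.map_sum_le (fun _ _ => by positivity) hw (fun i _ => Set.mem_univ (f i))

lemma le_sqrt_of_forall_mul_le {E L K : ℝ} (hL : 0 < L) (hK : 0 ≤ K)
    (h : ∀ t > 0, t * E ≤ L + t ^ 2 * K / 2) : E ≤ √(2 * L * K) := by
  rcases hK.eq_or_lt with rfl | hK
  · by_contra! hE
    rw [mul_zero, sqrt_zero] at hE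
    have := h (2 * L / E) (by positivity)
    rw [div_mul_cancel₀ _ hE.ne'] at this
    linarith
  · set t := √(2 * L / K)
    have ht : 0 < t := by positivity
    have ht2 : t ^ 2 * K = 2 * L := by rw [sq_sqrt (by positivity)]; field_simp
    have hsqrt : √(2 * L * K) = t * K := by
      rw [← ht2, show t ^ 2 * K * K = (t * K) ^ 2 by ring, sqrt_sq (by positivity)]
    rw [hsqrt, ← mul_le_mul_iff_right₀ ht]
    nlinarith [h t ht]

/-- Massart's finite class lemma. -/
theorem expect_sup'_abs_signVec_dotProduct_le {ι : Type*} [Fintype ι] [DecidableEq ι]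
    (W : Finset (ι → ℝ)) (hW : W.Nonempty) {R : ℝ} (hR : 0 ≤ R)
    (hWR : ∀ w ∈ W, ∀ i, |w i| ≤ R) :
    𝔼 s, W.sup' hW (fun w => |signVec s ⬝ᵥ w|) ≤ R * √(2 * Fintype.card ι * log (2 * #W)) := by
  set K := R ^ 2 * Fintype.card ι
  have hL : 0 < log (2 * #W) := log_pos (by have := hW.card_pos; norm_cast; omega)
  have hmax (t : ℝ) (ht : 0 ≤ t) (s : ι → Bool) : exp (t * W.sup' hW (fun w => |signVec s ⬝ᵥ w|))
      ≤ ∑ w ∈ W, (exp (t * (signVec s ⬝ᵥ w)) + exp (-t * (signVec s ⬝ᵥ w))) := by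
    obtain ⟨w, hw, hmax⟩ := exists_mem_eq_sup' hW fun w => |signVec s ⬝ᵥ w|
    rw [hmax, show t * |signVec s ⬝ᵥ w| = |t * (signVec s ⬝ᵥ w)| by rw [abs_mul, abs_of_nonneg ht]]
    refine (exp_abs_le _).trans ?_
    rw [← neg_mul]
    exact single_le_sum (f := fun w => exp (t * (signVec s ⬝ᵥ w)) + exp (-t * (signVec s ⬝ᵥ w)))
      (fun _ _ => by positivity) hw
  have hmgf (t : ℝ) (ht : 0 < t) :
      t * 𝔼 s, W.sup' hW (fun w => |signVec s ⬝ᵥ w|) ≤ log (2 * #W) + t ^ 2 * K / 2 := by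
    rw [← exp_le_exp, exp_add, exp_log (by positivity), mul_expect]
    calc exp (𝔼 s, t * W.sup' hW (fun w => |signVec s ⬝ᵥ w|))
        ≤ 𝔼 s, exp (t * W.sup' hW (fun w => |signVec s ⬝ᵥ w|)) :=
          exp_expect_le_expect_exp univ_nonempty _
      _ ≤ 𝔼 s, ∑ w ∈ W, (exp (t * (signVec s ⬝ᵥ w)) + exp (-t * (signVec s ⬝ᵥ w))) :=
          expect_le_expect fun s _ => hmax t ht.le s
      _ = ∑ w ∈ W, (𝔼 s, exp (t * (signVec s ⬝ᵥ w)) + 𝔼 s, exp (-t * (signVec s ⬝ᵥ w))) := by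
          rw [expect_sum_comm]; simp only [expect_add_distrib]
      _ ≤ ∑ _w ∈ W, (exp (t ^ 2 * K / 2) + exp ((-t) ^ 2 * K / 2)) :=
          sum_le_sum fun w hw => add_le_add
            (expect_exp_mul_signVec_dotProduct_le _ (hWR w hw))
            (expect_exp_mul_signVec_dotProduct_le _ (hWR w hw))
      _ = 2 * #W * exp (t ^ 2 * K / 2) := by
          simp only [neg_sq, sum_const, nsmul_eq_mul]; ring
  calc 𝔼 s, W.sup' hW (fun w => |signVec s ⬝ᵥ w|) ≤ √(2 * log (2 * #W) * K) :=
        le_sqrt_of_forall_mul_le hL (by positivity) hmgf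
    _ = R * √(2 * Fintype.card ι * log (2 * #W)) := by
        rw [show 2 * log (2 * #W) * K = R ^ 2 * (2 * Fintype.card ι * log (2 * #W)) by ring,
          sqrt_mul (sq_nonneg R), sqrt_sq hR]

lemma abs_signVec_dotProduct_le_chain {ι : Type*} [Fintype ι] (s : ι → Bool) {a : ι → ℝ}
    (p : ℕ → ι → ℝ) (hp0 : p 0 = 0) (m : ℕ) {ε : ℝ} (hε : ∀ i, |a i - p m i| ≤ ε) :
    |signVec s ⬝ᵥ a| ≤ Fintype.card ι * ε + ∑ k ∈ range m, |signVec s ⬝ᵥ (p (k + 1) - p k)| := by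
  have ha : a = (a - p m) + ∑ k ∈ range m, (p (k + 1) - p k) := by
    rw [sum_range_sub, hp0, sub_zero, sub_add_cancel]
  calc |signVec s ⬝ᵥ a|
      = |signVec s ⬝ᵥ (a - p m) + ∑ k ∈ range m, signVec s ⬝ᵥ (p (k + 1) - p k)| := by
        rw [← dotProduct_sum, ← dotProduct_add, ← ha]
    _ ≤ |signVec s ⬝ᵥ (a - p m)| + ∑ k ∈ range m, |signVec s ⬝ᵥ (p (k + 1) - p k)| :=
        (abs_add_le _ _).trans (add_le_add_right (abs_sum_le_sum_abs _ _) _)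
    _ ≤ _ := by gcongr; exact abs_signVec_dotProduct_le s hε

theorem expect_sSup_abs_signVec_dotProduct_le_chain {ι : Type*} [Fintype ι] [DecidableEq ι]
    {A : Set (ι → ℝ)} (hA : A.Nonempty) {p : ℕ → (ι → ℝ) → ι → ℝ} {W : ℕ → Finset (ι → ℝ)}
    {ε R : ℕ → ℝ} (hp0 : ∀ a ∈ A, p 0 a = 0) (hp : ∀ j, ∀ a ∈ A, ∀ i, |a i - p j a i| ≤ ε j)
    (hW : ∀ j, ∀ a ∈ A, p (j + 1) a - p j a ∈ W j) (hR : ∀ j, 0 ≤ R j)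
    (hWR : ∀ j, ∀ w ∈ W j, ∀ i, |w i| ≤ R j) (m : ℕ) :
    𝔼 s, sSup ((fun a => |signVec s ⬝ᵥ a|) '' A)
      ≤ Fintype.card ι * ε m + ∑ k ∈ range m, R k * √(2 * Fintype.card ι * log (2 * #(W k))) := by
  obtain ⟨a₀, ha₀⟩ := hA
  have hWne (k : ℕ) : (W k).Nonempty := ⟨_, hW k a₀ ha₀⟩
  have hsup (s : ι → Bool) : sSup ((fun a => |signVec s ⬝ᵥ a|) '' A) ≤ Fintype.card ι * ε m
      + ∑ k ∈ range m, (W k).sup' (hWne k) (fun w => |signVec s ⬝ᵥ w|) := by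
    refine csSup_le ⟨_, a₀, ha₀, rfl⟩ ?_
    rintro _ ⟨a, ha, rfl⟩
    refine (abs_signVec_dotProduct_le_chain s (p · a) (hp0 a ha) m (hp m a ha)).trans ?_
    gcongr with k
    exact le_sup' (fun w => |signVec s ⬝ᵥ w|) (hW k a ha)
  calc 𝔼 s, sSup ((fun a => |signVec s ⬝ᵥ a|) '' A)
      ≤ 𝔼 s, (Fintype.card ι * ε m
          + ∑ k ∈ range m, (W k).sup' (hWne k) (fun w => |signVec s ⬝ᵥ w|)) :=
        expect_le_expect fun s _ => hsup s
    _ = Fintype.card ι * ε m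
          + ∑ k ∈ range m, 𝔼 s, (W k).sup' (hWne k) (fun w => |signVec s ⬝ᵥ w|) := by
        rw [expect_add_distrib, Fintype.expect_const, expect_sum_comm]
    _ ≤ _ := by
        gcongr with k
        exact expect_sup'_abs_signVec_dotProduct_le (W k) (hWne k) (hR k) (hWR k)

lemma div_two_pow_mem_Ioc {B : ℝ} (hB : 0 < B) (j : ℕ) : B / 2 ^ j ∈ Set.Ioc 0 B :=
  ⟨by positivity, div_le_self hB.le (one_le_pow₀ one_le_two)⟩

lemma exists_dyadic_nets {ι : Type*} {A : Set (ι → ℝ)} {B : ℝ} {C : ℝ → ℕ} (hB : 0 < B)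
    (h0 : (0 : ι → ℝ) ∈ A) (hAB : ∀ a ∈ A, ∀ i, |a i| ≤ B) (hanti : AntitoneOn C (Set.Ioc 0 B))
    (hcover : ∀ ε ∈ Set.Ioc (0 : ℝ) B, ∃ V : Finset (ι → ℝ),
      #V ≤ C ε ∧ ∀ a ∈ A, ∃ v ∈ V, ∀ i, |a i - v i| ≤ ε) :
    ∃ V : ℕ → Finset (ι → ℝ), V 0 = {0} ∧
      (∀ j, #(V j) ≤ C (B / 2 ^ (j + 1)) ∧ #(V (j + 1)) ≤ C (B / 2 ^ (j + 1))) ∧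
      ∀ j, ∀ a ∈ A, ∃ v ∈ V j, ∀ i, |a i - v i| ≤ B / 2 ^ j := by
  choose V hVcard hVcover using fun j : ℕ =>
    hcover (B / 2 ^ (j + 1)) (div_two_pow_mem_Ioc hB (j + 1))
  refine ⟨fun j => j.casesOn {0} V, rfl, fun j => ⟨?_, hVcard j⟩, ?_⟩
  · cases j with
    | zero =>
      obtain ⟨v, hv, -⟩ := hVcover 0 0 h0
      exact (card_pos.2 ⟨v, hv⟩).trans_le (hVcard 0)
    | succ j =>
      exact (hVcard j).trans (hanti (div_two_pow_mem_Ioc hB _) (div_two_pow_mem_Ioc hB _)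
        (div_le_div_of_nonneg_left hB.le (by positivity)
          (pow_le_pow_right₀ one_le_two (j + 1).le_succ)))
  · rintro (_ | j) a ha
    · exact ⟨0, mem_singleton_self 0, by simpa using hAB a ha⟩
    · exact hVcover j a ha

lemma exists_dyadic_chain {ι : Type*} {A : Set (ι → ℝ)} {B : ℝ} {C : ℝ → ℕ}
    (hB : 0 < B) (h0 : (0 : ι → ℝ) ∈ A) (hAB : ∀ a ∈ A, ∀ i, |a i| ≤ B)
    (hanti : AntitoneOn C (Set.Ioc 0 B))
    (hcover : ∀ ε ∈ Set.Ioc (0 : ℝ) B, ∃ V : Finset (ι → ℝ),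
      #V ≤ C ε ∧ ∀ a ∈ A, ∃ v ∈ V, ∀ i, |a i - v i| ≤ ε) :
    ∃ (p : ℕ → (ι → ℝ) → ι → ℝ) (W : ℕ → Finset (ι → ℝ)), (∀ a ∈ A, p 0 a = 0) ∧
      (∀ j, ∀ a ∈ A, ∀ i, |a i - p j a i| ≤ B / 2 ^ j) ∧
      (∀ j, ∀ a ∈ A, p (j + 1) a - p j a ∈ W j) ∧
      (∀ j, ∀ w ∈ W j, ∀ i, |w i| ≤ 3 * (B / 2 ^ (j + 1))) ∧
      ∀ j, #(W j) ≤ C (B / 2 ^ (j + 1)) ^ 2 := by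
  classical
  obtain ⟨V, hV0, hVcard, hVcover⟩ := exists_dyadic_nets hB h0 hAB hanti hcover
  have hproj (j : ℕ) (a : ι → ℝ) :
      ∃ v, a ∈ A → v ∈ V j ∧ ∀ i, |a i - v i| ≤ B / 2 ^ j := by
    by_cases ha : a ∈ A
    · obtain ⟨v, hv, hav⟩ := hVcover j a ha
      exact ⟨v, fun _ => ⟨hv, hav⟩⟩
    · exact ⟨0, fun h => absurd h ha⟩
  choose p hp using hproj
  refine ⟨p, fun j => ((V (j + 1) ×ˢ V j).image fun q => q.1 - q.2).filter
      fun w => ∀ i, |w i| ≤ 3 * (B / 2 ^ (j + 1)),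
    fun a ha => by simpa [hV0] using (hp 0 a ha).1, fun j a ha => (hp j a ha).2,
    fun j a ha => ?_, fun j w hw => (mem_filter.1 hw).2, fun j => ?_⟩
  · refine mem_filter.2 ⟨mem_image.2 ⟨(p (j + 1) a, p j a),
      mem_product.2 ⟨(hp _ a ha).1, (hp j a ha).1⟩, rfl⟩, fun i => ?_⟩
    calc |(p (j + 1) a - p j a) i| ≤ |a i - p (j + 1) a i| + |a i - p j a i| := by
          rw [Pi.sub_apply, abs_sub_comm (a i)]; exact abs_sub_le _ _ _
      _ ≤ B / 2 ^ (j + 1) + B / 2 ^ j := add_le_add ((hp _ a ha).2 i) ((hp j a ha).2 i)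
      _ = 3 * (B / 2 ^ (j + 1)) := by rw [pow_succ]; field_simp; ring
  · calc #(filter _ _) ≤ #(V (j + 1) ×ˢ V j) := (card_filter_le _ _).trans card_image_le
      _ = #(V (j + 1)) * #(V j) := card_product _ _
      _ ≤ C (B / 2 ^ (j + 1)) * C (B / 2 ^ (j + 1)) :=
        Nat.mul_le_mul (hVcard j).2 (hVcard j).1
      _ = C (B / 2 ^ (j + 1)) ^ 2 := (sq _).symm

lemma antitoneOn_sqrt_log_two_mul {C : ℝ → ℕ} {s : Set ℝ} (hC : AntitoneOn C s) :
    AntitoneOn (fun x => √(log (2 * C x))) s := by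
  intro x hx y hy hxy
  rcases Nat.eq_zero_or_pos (C y) with h | h
  · simp [h]
  · have : (C y : ℝ) ≤ C x := by exact_mod_cast hC hx hy hxy
    dsimp only
    gcongr

lemma sqrt_two_mul_log_two_mul_le {N c : ℕ} (hN : 1 ≤ N) (hNc : N ≤ c ^ 2) :
    √(2 * log (2 * N)) ≤ 2 * √(log (2 * c)) := by
  have hNc' : (N : ℝ) ≤ c ^ 2 := by exact_mod_cast hNc
  have hlog : log (2 * N) ≤ 2 * log (2 * c) := by
    rw [show 2 * log (2 * c) = log ((2 * c) ^ 2) by rw [log_pow]; norm_num]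
    exact log_le_log (by positivity) (by linarith)
  calc √(2 * log (2 * N)) ≤ √(2 ^ 2 * log (2 * c)) := sqrt_le_sqrt (by linarith)
    _ = 2 * √(log (2 * c)) := by rw [sqrt_mul (by norm_num), sqrt_sq (by norm_num)]

lemma sum_dyadic_mul_le_integral {g : ℝ → ℝ} {B : ℝ} (hB : 0 < B)
    (hg : AntitoneOn g (Set.Ioc 0 B)) (m : ℕ) :
    ∑ k ∈ range m, B / 2 ^ (k + 1) * g (B / 2 ^ (k + 1))
      ≤ 2 * ∫ x in B / 2 ^ (m + 1)..B / 2, g x := by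
  set ε : ℕ → ℝ := fun j => B / 2 ^ (j + 1) with hε
  have hsub (j : ℕ) : Set.Icc (ε (j + 1)) (ε j) ⊆ Set.Ioc 0 B := fun x hx =>
    ⟨(div_two_pow_mem_Ioc hB _).1.trans_le hx.1, hx.2.trans (div_two_pow_mem_Ioc hB _).2⟩
  have hle (j : ℕ) : ε (j + 1) ≤ ε j :=
    div_le_div_of_nonneg_left hB.le (by positivity) (pow_le_pow_right₀ one_le_two (j + 1).le_succ)
  have hint (j : ℕ) : IntervalIntegrable g volume (ε (j + 1)) (ε j) :=
    (hg.mono (Set.uIcc_of_le (hle j) ▸ hsub j)).intervalIntegrable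
  have hpiece (j : ℕ) : ε j * g (ε j) ≤ 2 * ∫ x in ε (j + 1)..ε j, g x := by
    have hconst := intervalIntegral.integral_mono_on (hle j) intervalIntegrable_const (hint j)
      fun x hx => hg (hsub j hx) (hsub j ⟨hle j, le_rfl⟩) hx.2
    have hhalf : ε j - ε (j + 1) = ε j / 2 := by simp only [hε, pow_succ]; field_simp; ring
    rw [intervalIntegral.integral_const, smul_eq_mul, hhalf] at hconst
    linarith
  calc ∑ k ∈ range m, ε k * g (ε k) ≤ ∑ k ∈ range m, 2 * ∫ x in ε (k + 1)..ε k, g x :=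
        sum_le_sum fun k _ => hpiece k
    _ = 2 * ∫ x in ε m..ε 0, g x := by
        rw [← mul_sum, sum_congr rfl fun k _ => intervalIntegral.integral_symm (ε k) (ε (k + 1)),
          sum_neg_distrib,
          intervalIntegral.sum_integral_adjacent_intervals fun k _ => (hint k).symm,
          intervalIntegral.integral_symm (ε m), neg_neg]
    _ = 2 * ∫ x in B / 2 ^ (m + 1)..B / 2, g x := by simp [hε]

theorem expect_sSup_abs_signVec_dotProduct_le_dyadic {ι : Type*} [Fintype ι] [DecidableEq ι]
    {A : Set (ι → ℝ)} {B : ℝ} {C : ℝ → ℕ} (hB : 0 < B) (h0 : (0 : ι → ℝ) ∈ A)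
    (hAB : ∀ a ∈ A, ∀ i, |a i| ≤ B) (hanti : AntitoneOn C (Set.Ioc 0 B))
    (hcover : ∀ ε ∈ Set.Ioc (0 : ℝ) B, ∃ V : Finset (ι → ℝ),
      #V ≤ C ε ∧ ∀ a ∈ A, ∃ v ∈ V, ∀ i, |a i - v i| ≤ ε) (m : ℕ) :
    𝔼 s, sSup ((fun a => |signVec s ⬝ᵥ a|) '' A) ≤ Fintype.card ι * (B / 2 ^ m)
      + 12 * √(Fintype.card ι) * ∫ x in B / 2 ^ (m + 1)..B / 2, √(log (2 * C x)) := by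
  obtain ⟨p, W, hp0, hp, hW, hWR, hWcard⟩ := exists_dyadic_chain hB h0 hAB hanti hcover
  refine (expect_sSup_abs_signVec_dotProduct_le_chain ⟨0, h0⟩ hp0 hp hW (fun j => by positivity)
    hWR m).trans (add_le_add_right ?_ _)
  set n : ℝ := (Fintype.card ι : ℝ)
  have hterm (k : ℕ) : 3 * (B / 2 ^ (k + 1)) * √(2 * n * log (2 * #(W k)))
      ≤ 6 * √n * (B / 2 ^ (k + 1) * √(log (2 * C (B / 2 ^ (k + 1))))) := by
    have hlog := sqrt_two_mul_log_two_mul_le (card_pos.2 ⟨_, hW k 0 h0⟩) (hWcard k)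
    rw [mul_assoc 2, mul_left_comm 2, sqrt_mul (Nat.cast_nonneg _)]
    calc 3 * (B / 2 ^ (k + 1)) * (√n * √(2 * log (2 * #(W k))))
        ≤ 3 * (B / 2 ^ (k + 1)) * (√n * (2 * √(log (2 * C (B / 2 ^ (k + 1)))))) := by gcongr
      _ = _ := by ring
  calc ∑ k ∈ range m, 3 * (B / 2 ^ (k + 1)) * √(2 * n * log (2 * #(W k)))
      ≤ ∑ k ∈ range m, 6 * √n * (B / 2 ^ (k + 1) * √(log (2 * C (B / 2 ^ (k + 1))))) :=
        sum_le_sum fun k _ => hterm k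
    _ ≤ 6 * √n * (2 * ∫ x in B / 2 ^ (m + 1)..B / 2, √(log (2 * C x))) := by
        rw [← mul_sum]
        gcongr
        exact sum_dyadic_mul_le_integral hB (antitoneOn_sqrt_log_two_mul hanti) m
    _ = _ := by ring

lemma exists_dyadic_scale {B δ : ℝ} (hδ : 0 < δ) (hδB : δ < B) :
    ∃ m : ℕ, B / 2 ^ m ≤ 4 * δ ∧ Set.Ioc (B / 2 ^ (m + 1)) (B / 2) ⊆ Set.Ioc δ B := by
  have hex : ∃ m : ℕ, B / 2 ^ m ≤ 4 * δ := by
    obtain ⟨m, hm⟩ := pow_unbounded_of_one_lt (B / (4 * δ)) one_lt_two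
    exact ⟨m, (div_le_iff₀ (by positivity)).2 (by rw [div_lt_iff₀ (by positivity)] at hm; linarith)⟩
  refine ⟨Nat.find hex, Nat.find_spec hex, ?_⟩
  cases hm : Nat.find hex with
  | zero => simp -- `Ioc (B / 2) (B / 2)` is empty
  | succ m =>
    have hδm : 4 * δ < B / 2 ^ m := lt_of_not_ge (Nat.find_min hex (hm ▸ m.lt_succ_self))
    refine Set.Ioc_subset_Ioc ?_ (by linarith)
    rw [pow_add, pow_add, ← div_div, ← div_div]
    linarith

lemma intervalIntegral_le_of_Ioc_subset {g : ℝ → ℝ} {a b c d : ℝ} (hab : a ≤ b) (hcd : c ≤ d)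
    (hsub : Set.Ioc a b ⊆ Set.Ioc c d) (hg : IntervalIntegrable g volume c d)
    (hg0 : ∀ x ∈ Set.Ioc c d, 0 ≤ g x) :
    ∫ x in a..b, g x ≤ ∫ x in c..d, g x := by
  rw [intervalIntegral.integral_of_le hab, intervalIntegral.integral_of_le hcd]
  exact setIntegral_mono_set ((intervalIntegrable_iff_integrableOn_Ioc_of_le hcd).1 hg)
    ((ae_restrict_iff' measurableSet_Ioc).2 (.of_forall hg0)) hsub.eventuallyLE

theorem expect_sSup_abs_signVec_dotProduct_le_integral {ι : Type*} [Fintype ι] [DecidableEq ι]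
    {A : Set (ι → ℝ)} {B : ℝ} {C : ℝ → ℕ} (hB : 0 < B) (h0 : (0 : ι → ℝ) ∈ A)
    (hAB : ∀ a ∈ A, ∀ i, |a i| ≤ B) (hanti : AntitoneOn C (Set.Ioc 0 B))
    (hcover : ∀ ε ∈ Set.Ioc (0 : ℝ) B, ∃ V : Finset (ι → ℝ),
      #V ≤ C ε ∧ ∀ a ∈ A, ∃ v ∈ V, ∀ i, |a i - v i| ≤ ε) {δ : ℝ} (hδ : 0 < δ) (hδB : δ < B) :
    𝔼 s, sSup ((fun a => |signVec s ⬝ᵥ a|) '' A) ≤ Fintype.card ι * (4 * δ)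
      + 12 * √(Fintype.card ι) * ∫ x in δ..B, √(log (2 * C x)) := by
  obtain ⟨m, hm, hsub⟩ := exists_dyadic_scale hδ hδB
  have hint : ∫ x in B / 2 ^ (m + 1)..B / 2, √(log (2 * C x)) ≤ ∫ x in δ..B, √(log (2 * C x)) := by
    refine intervalIntegral_le_of_Ioc_subset (div_le_div_of_nonneg_left hB.le (by positivity)
      (le_self_pow₀ one_le_two (by omega))) hδB.le hsub ?_ fun _ _ => sqrt_nonneg _
    refine ((antitoneOn_sqrt_log_two_mul hanti).mono ?_).intervalIntegrable
    rw [Set.uIcc_of_le hδB.le]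
    exact fun x hx => ⟨hδ.trans_le hx.1, hx.2⟩
  refine (expect_sSup_abs_signVec_dotProduct_le_dyadic hB h0 hAB hanti hcover m).trans ?_
  gcongr

lemma Real.sSup_image_const_mul {α : Type*} {c : ℝ} (hc : 0 ≤ c) (f : α → ℝ) (s : Set α) :
    sSup ((fun x => c * f x) '' s) = c * sSup (f '' s) := by
  rw [← smul_eq_mul, ← Real.sSup_smul_of_nonneg hc, ← Set.image_smul, Set.image_image]
  rfl

lemma one_div_two_pow_mul_sum_sSup_eq_expect {ι : Type*} [Fintype ι] [DecidableEq ι]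
    (A : Set (ι → ℝ)) :
    (1 / 2 ^ Fintype.card ι : ℝ) * ∑ s : ι → Bool,
        sSup ((fun a => (1 / Fintype.card ι : ℝ) * |∑ i, (if s i then (1 : ℝ) else -1) * a i|) '' A)
      = 1 / Fintype.card ι * 𝔼 s, sSup ((fun a => |signVec s ⬝ᵥ a|) '' A) := by
  simp_rw [Real.sSup_image_const_mul (one_div_nonneg.2 (Nat.cast_nonneg _)), ← mul_sum,
    Fintype.expect_eq_sum_div_card]
  simp only [signVec, dotProduct, Fintype.card_pi, Fintype.card_bool, prod_const, card_univ,
    Nat.cast_pow, Nat.cast_ofNat]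
  ring

theorem dudley_chaining_general (n : ℕ) (B : ℝ) (hB : 0 < B)
    (A : Set (Fin n → ℝ)) (h0 : (0 : Fin n → ℝ) ∈ A)
    (hAB : ∀ a ∈ A, ∀ i, |a i| ≤ B)
    (C : ℝ → ℕ) (hanti : AntitoneOn C (Set.Ioc 0 B))
    (hcover : ∀ ε ∈ Set.Ioc (0:ℝ) B, ∃ V : Finset (Fin n → ℝ),
      V.card ≤ C ε ∧ ∀ a ∈ A, ∃ v ∈ V, ∀ i, |a i - v i| ≤ ε) :
    (1 / 2 ^ n : ℝ) * ∑ s : Fin n → Bool,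
        sSup ((fun a : Fin n → ℝ =>
          (1 / n : ℝ) * |∑ i, (if s i then (1:ℝ) else -1) * a i|) '' A)
      ≤ sInf ((fun δ => 4 * δ +
          12 / Real.sqrt n * ∫ ε in δ..B, Real.sqrt (Real.log (2 * C ε))) ''
          Set.Ioo (0:ℝ) B) := by
  have hmean := one_div_two_pow_mul_sum_sSup_eq_expect A
  rw [Fintype.card_fin] at hmean
  rw [hmean]
  refine le_csInf ((Set.nonempty_Ioo.2 hB).image _) ?_
  rintro _ ⟨δ, ⟨hδ, hδB⟩, rfl⟩
  have hdudley := expect_sSup_abs_signVec_dotProduct_le_integral hB h0 hAB hanti hcover hδ hδB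
  rw [Fintype.card_fin] at hdudley
  have hcancel : (1 / n : ℝ) * n ≤ 1 := by
    rcases eq_or_ne (n : ℝ) 0 with h | h <;> simp [h]
  calc 1 / n * 𝔼 s, sSup ((fun a => |signVec s ⬝ᵥ a|) '' A)
      ≤ 1 / n * (n * (4 * δ) + 12 * √n * ∫ x in δ..B, √(log (2 * C x))) := by gcongr
    _ = (1 / n * n) * (4 * δ) + 12 / √n * ∫ x in δ..B, √(log (2 * C x)) := by
        rw [div_eq_mul_one_div 12, ← sqrt_div_self']; ring
    _ ≤ 4 * δ + 12 / √n * ∫ x in δ..B, √(log (2 * C x)) := by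
        gcongr ?_ + _
        exact mul_le_of_le_one_left (by positivity) hcancel

/-- **Dudley-type chaining bound (Lemma 3.8).**
For a countable `A ⊆ ℝⁿ` with `0 ∈ A`, bounded by `B` in `d_∞`, whose `ε`-covering
numbers (w.r.t. `d_∞`) are bounded by an antitone function `C`, the Rademacher
average of `A` is at most `inf_{0<δ<B} (4δ + (12/√n)·∫_δ^B √(log(2·C(ε))) dε)`.
The expectation over the i.i.d. Rademacher signs is written as the average
over all sign patterns. -/
theorem dudley_chaining (n : ℕ) (hn : 1 ≤ n) (B : ℝ) (hB : 0 < B)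
    (A : Set (Fin n → ℝ)) (hAc : A.Countable) (h0 : (0 : Fin n → ℝ) ∈ A)
    (hAB : ∀ a ∈ A, ∀ i, |a i| ≤ B)
    (C : ℝ → ℕ) (hanti : AntitoneOn C (Set.Ioc 0 B))
    (hcover : ∀ ε ∈ Set.Ioc (0:ℝ) B, ∃ V : Finset (Fin n → ℝ),
      V.card ≤ C ε ∧ ∀ a ∈ A, ∃ v ∈ V, ∀ i, |a i - v i| ≤ ε) :
    (1 / 2 ^ n : ℝ) * ∑ s : Fin n → Bool,
        sSup ((fun a : Fin n → ℝ =>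
          (1 / n : ℝ) * |∑ i, (if s i then (1:ℝ) else -1) * a i|) '' A)
      ≤ sInf ((fun δ => 4 * δ +
          12 / Real.sqrt n * ∫ ε in δ..B, Real.sqrt (Real.log (2 * C ε))) ''
          Set.Ioo (0:ℝ) B) :=
  dudley_chaining_general n B hB A h0 hAB C hanti hcover
end
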